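/- If an extended open graph (G, I, O, λ) has a gflow and Z ∈ λ(u) for every u ∈ Iᶜ ∩ Oᶜ, then (G, I, O, λ) has a Z-NF gflow, i.e., a gflow g with g(u) ⊆ {u} ∪ O for all u ∈ Oᶜ. -/

import Mathlib

open scoped symmDiff

inductive Pauli | X | Y | Z
deriving DecidableEq

inductive MPlane | XY | XZ | YZ
deriving DecidableEq

/-- The set of Pauli operators defining a measurement plane. -/
def MPlane.paulis : MPlane → Finset Pauli
  | .XY => {.X, .Y}
  | .XZ => {.X, .Z}
  | .YZ => {.Y, .Z}

variable {V : Type} [Fintype V] [DecidableEq V]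

/-- Odd neighbourhood: vertices with an odd number of neighbours in `A`. -/
def oddNbhd (G : SimpleGraph V) [DecidableRel G.Adj] (A : Finset V) : Finset V :=
  Finset.univ.filter fun w => Odd (A.filter (G.Adj w)).card

/-- `f` is extensive w.r.t. the strict order `r`. -/
def IsExtensive (O : Finset V) (r : V → V → Prop) (f : V → Finset V) : Prop :=
  ∀ u ∉ O, ∀ v ∈ f u, v ≠ u → r u v

/-- gflow of an extended open graph `(G, I, O, lam)`. -/
def IsGflow (G : SimpleGraph V) [DecidableRel G.Adj]
    (I O : Finset V) (lam : V → MPlane) (g : V → Finset V) : Prop :=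
  (∀ u ∉ O, g u ⊆ Iᶜ) ∧
  (∃ r : V → V → Prop, IsStrictOrder V r ∧
    IsExtensive O r (fun u => g u ∪ oddNbhd G (g u))) ∧
  ∀ u ∉ O,
    (lam u = .XY → u ∈ oddNbhd G (g u) ∧ u ∉ g u) ∧
    (lam u = .XZ → u ∈ g u ∧ u ∈ oddNbhd G (g u)) ∧
    (lam u = .YZ → u ∈ g u ∧ u ∉ oddNbhd G (g u))

/-- σ-normal forms for gflows. -/
def IsNF (σ : Pauli) (G : SimpleGraph V) [DecidableRel G.Adj]
    (O : Finset V) (g : V → Finset V) : Prop :=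
  match σ with
  | .X => ∀ u ∉ O, oddNbhd G (g u) ⊆ insert u O
  | .Y => ∀ u ∉ O, (g u ∆ oddNbhd G (g u)) ⊆ insert u O
  | .Z => ∀ u ∉ O, g u ⊆ insert u O

/-!
If `C` avoids the inputs and `C ∪ oddNbhd G C` lies strictly after `u` in the gflow order, then
replacing `g u` by `g u ∆ C` keeps a gflow: `oddNbhd G` is additive for `∆`, so the plane
conditions at `u` are unchanged, and every new vertex lies after `u`. Such sets `C` are closed
under `∆`. Going down the finite order, every non-output `v` after `u` already has a corrected
set `g' v` with `g' v \ O = {v}` (`Z ∈ λ(v)` gives `v ∈ g v`); the `∆` of these over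
`v ∈ g u \ ({u} ∪ O)` is such a `C`, and it removes exactly those vertices from `g u`.
-/

open Finset Function

namespace Finset

variable {α : Type*} [DecidableEq α]

theorem filter_symmDiff (p : α → Prop) [DecidablePred p] (s t : Finset α) :
    (s ∆ t).filter p = s.filter p ∆ t.filter p := by
  ext
  simp only [mem_filter, mem_symmDiff]
  tauto

theorem odd_card_symmDiff_iff (s t : Finset α) : Odd #(s ∆ t) ↔ ¬(Odd #s ↔ Odd #t) := by
  have hs := card_sdiff_add_card_inter s t
  have ht := card_sdiff_add_card_inter t s
  have hst : #(s ∆ t) = #(s \ t) + #(t \ s) := card_union_of_disjoint disjoint_sdiff_sdiff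
  rw [inter_comm] at ht
  simp only [Nat.odd_iff]
  omega

theorem symmDiff_subset_iff_sdiff_eq {s t u : Finset α} : s ∆ t ⊆ u ↔ s \ u = t \ u := by
  simp only [subset_iff, Finset.ext_iff, mem_symmDiff, mem_sdiff]
  exact forall_congr' fun x => by tauto

theorem exists_sdiff_eq_of_symmDiff_closed {P : Finset α → Prop} (hP₀ : P ∅)
    (hP : ∀ A B, P A → P B → P (A ∆ B)) {T S : Finset α}
    (hS : ∀ v ∈ S, ∃ D, P D ∧ D \ T = {v}) : ∃ D, P D ∧ D \ T = S := by
  induction S using Finset.induction_on with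
  | empty => exact ⟨∅, hP₀, empty_sdiff T⟩
  | insert v S hvS ih =>
    obtain ⟨D, hD, hDT⟩ := ih fun w hw => hS w (mem_insert_of_mem hw)
    obtain ⟨Dv, hDv, hDvT⟩ := hS v (mem_insert_self v S)
    have hdistrib : (D ∆ Dv) \ T = (D \ T) ∆ (Dv \ T) := by
      ext
      simp only [mem_sdiff, mem_symmDiff]
      tauto
    refine ⟨D ∆ Dv, hP D Dv hD hDv, ?_⟩
    rw [hdistrib, hDT, hDvT, symmDiff_comm, symmDiff_eq_union (disjoint_singleton_left.mpr hvS),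
      insert_eq]

end Finset

section

variable (G : SimpleGraph V) [DecidableRel G.Adj]

theorem oddNbhd_symmDiff (A B : Finset V) :
    oddNbhd G (A ∆ B) = oddNbhd G A ∆ oddNbhd G B := by
  ext w
  simp only [oddNbhd, mem_filter_univ, filter_symmDiff, odd_card_symmDiff_iff, mem_symmDiff]
  tauto

theorem symmDiff_union_oddNbhd_subset (A B : Finset V) :
    A ∆ B ∪ oddNbhd G (A ∆ B) ⊆ (A ∪ oddNbhd G A) ∪ (B ∪ oddNbhd G B) := by
  intro w
  simp only [oddNbhd_symmDiff, mem_union, mem_symmDiff]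
  tauto

/-- The sets that may be added (by `∆`) to the correcting set of `u` without breaking the
gflow conditions at `u`. -/
def IsLaterSet (I : Finset V) (r : V → V → Prop) (u : V) (C : Finset V) : Prop :=
  C ⊆ Iᶜ ∧ ∀ w ∈ C ∪ oddNbhd G C, r u w

namespace IsLaterSet

variable {G} {I : Finset V} {r : V → V → Prop} {u : V} {A C D : Finset V}

theorem empty : IsLaterSet G I r u ∅ :=
  ⟨empty_subset _, by simp [oddNbhd]⟩

theorem symmDiff (hC : IsLaterSet G I r u C) (hD : IsLaterSet G I r u D) :
    IsLaterSet G I r u (C ∆ D) :=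
  ⟨symmDiff_subset_union.trans (union_subset hC.1 hD.1), fun w hw =>
    (mem_union.mp (symmDiff_union_oddNbhd_subset G C D hw)).elim (hC.2 w) (hD.2 w)⟩

theorem mem_symmDiff_iff [Std.Irrefl r] (hC : IsLaterSet G I r u C) : u ∈ A ∆ C ↔ u ∈ A := by
  have hu : u ∉ C := fun h => irrefl u (hC.2 u (mem_union_left _ h))
  simp [mem_symmDiff, hu]

theorem mem_oddNbhd_symmDiff_iff [Std.Irrefl r] (hC : IsLaterSet G I r u C) :
    u ∈ oddNbhd G (A ∆ C) ↔ u ∈ oddNbhd G A := by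
  have hu : u ∉ oddNbhd G C := fun h => irrefl u (hC.2 u (mem_union_right _ h))
  simp [oddNbhd_symmDiff, mem_symmDiff, hu]

theorem rel_of_mem_symmDiff (hA : ∀ w ∈ A ∪ oddNbhd G A, w ≠ u → r u w)
    (hC : IsLaterSet G I r u C) : ∀ w ∈ A ∆ C ∪ oddNbhd G (A ∆ C), w ≠ u → r u w :=
  fun w hw hwu => (mem_union.mp (symmDiff_union_oddNbhd_subset G A C hw)).elim
    (hA w · hwu) (hC.2 w)

end IsLaterSet

theorem exists_isLaterSet_symmDiff_subset {I O : Finset V} {r : V → V → Prop}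
    [IsStrictOrder V r] {g : V → Finset V} (hgI : ∀ u ∉ O, g u ⊆ Iᶜ)
    (hext : IsExtensive O r fun u => g u ∪ oddNbhd G (g u))
    (hdiag : ∀ u ∉ I, u ∉ O → u ∈ g u) (u : V) (hu : u ∉ O) :
    ∃ C, IsLaterSet G I r u C ∧ g u ∆ C ⊆ insert u O := by
  induction u using (Finite.wellFounded_of_trans_of_irrefl (swap r)).induction with
  | _ u ih =>
  set T := insert u O
  have hunit : ∀ v ∈ g u \ T, ∃ D, IsLaterSet G I r u D ∧ D \ T = {v} := by
    intro v hv
    obtain ⟨hvg, hvT⟩ := mem_sdiff.mp hv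
    obtain ⟨hvu, hvO⟩ : v ≠ u ∧ v ∉ O := by simpa [T] using hvT
    have huv : r u v := hext u hu v (mem_union_left _ hvg) hvu
    obtain ⟨Cv, hCv, hsub⟩ := ih v huv hvO
    have hvD : v ∈ g v ∆ Cv :=
      hCv.mem_symmDiff_iff.mpr (hdiag v (mem_compl.mp (hgI u hu hvg)) hvO)
    refine ⟨g v ∆ Cv, ⟨symmDiff_subset_union.trans (union_subset (hgI v hvO) hCv.1), ?_⟩, ?_⟩
    · intro w hw
      by_cases hwv : w = v
      · exact hwv ▸ huv
      · exact _root_.trans huv (hCv.rel_of_mem_symmDiff (hext v hvO) w hw hwv)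
    · refine eq_singleton_iff_unique_mem.mpr ⟨mem_sdiff.mpr ⟨hvD, hvT⟩, fun w hw => ?_⟩
      obtain ⟨hwD, hwT⟩ := mem_sdiff.mp hw
      exact (mem_insert.mp (hsub hwD)).resolve_right fun hwO => hwT (mem_insert_of_mem hwO)
  obtain ⟨D, hD, hDT⟩ :=
    exists_sdiff_eq_of_symmDiff_closed IsLaterSet.empty (fun _ _ => IsLaterSet.symmDiff) hunit
  exact ⟨D, hD, symmDiff_subset_iff_sdiff_eq.mpr hDT.symm⟩

end

/-- Theorem 1 for σ = Z: if every non-input non-output measurement plane contains Z,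
then a gflow can be put into Z-normal form. -/
theorem exists_ZNF_gflow (G : SimpleGraph V) [DecidableRel G.Adj]
    (I O : Finset V) (lam : V → MPlane)
    (h : ∃ g : V → Finset V, IsGflow G I O lam g)
    (hplane : ∀ u, u ∉ I → u ∉ O → Pauli.Z ∈ (lam u).paulis) :
    ∃ g : V → Finset V, IsGflow G I O lam g ∧ IsNF .Z G O g := by
  obtain ⟨g, hgI, ⟨r, hr, hext⟩, hplanes⟩ := h
  have hdiag : ∀ u ∉ I, u ∉ O → u ∈ g u := by
    intro u hI hO
    have hZ := hplane u hI hO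
    rcases hlam : lam u
    · simp [hlam, MPlane.paulis] at hZ
    · exact ((hplanes u hO).2.1 hlam).1
    · exact ((hplanes u hO).2.2 hlam).1
  choose! C hC hCsub using exists_isLaterSet_symmDiff_subset G hgI hext hdiag
  refine ⟨fun u => g u ∆ C u, ⟨?_, ⟨r, hr, ?_⟩, ?_⟩, hCsub⟩
  · exact fun u hu => symmDiff_subset_union.trans (union_subset (hgI u hu) (hC u hu).1)
  · exact fun u hu => (hC u hu).rel_of_mem_symmDiff (hext u hu)
  · intro u hu
    simpa only [(hC u hu).mem_symmDiff_iff, (hC u hu).mem_oddNbhd_symmDiff_iff] using hplanes u hu
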